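/- arXiv:1310.5250 — 5 statements merged into one kernel-verified Lean document; each statement's English description precedes it below -/
import Mathlib

section
/- Let N be a positive integer and let λ, b, c, t_φ, n_φ be integers satisfying c·λ + b ≡ 1 (mod N) and λ² - t_φ·λ + n_φ ≡ 0 (mod N). Set b₁ := (b-1, c) and b₂ := (c·n_φ + (b-1)·t_φ, 1-b), and let L := {(z₁, z₂) ∈ ℤ² : z₁ + z₂·λ ≡ 0 (mod N)}. Then: (i) b₁ ∈ L and b₂ ∈ L; (ii) the determinant of the matrix with rows b₁, b₂ equals -((b-1)² + c²·n_φ + c·(b-1)·t_φ), and (b-1)² + c²·n_φ + c·(b-1)·t_φ = q - t + 1 where q := c²·n_φ + b·c·t_φ + b² and t := c·t_φ + 2b; (iii) if N = (b-1)² + c²·n_φ + c·(b-1)·t_φ, then L equals the ℤ-span of {b₁, b₂}. -/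
/-!
Any two vectors `z, v ∈ L` have `det (z, v) ≡ 0 (mod N)`, because `z₁ ≡ -λ z₂` and `v₁ ≡ -λ v₂`.
So if `b₁, b₂ ∈ L` and `|det (b₁, b₂)| = N`, Cramer's rule writes every `z ∈ L` as an integral
combination of `b₁, b₂`. Identifying `(z₁, z₂)` with `z₁ + z₂ φ`, `b₁` is `π - 1` and `b₂` is
`φ̄ (π - 1)` with `φ̄ = t_φ - φ`; both annihilate the `λ`-eigenvector, and
`det (b₁, b₂) = -N(π - 1) = -(q - t + 1)`.
-/

/-- The lattice L = {(z₁, z₂) ∈ ℤ² : z₁ + z₂·λ ≡ 0 (mod N)} of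
2-dimensional decompositions of 0. -/
def decompLattice2 (N : ℕ) (lam : ℤ) : Submodule ℤ (Fin 2 → ℤ) where
  carrier := {z | ((z 0 + z 1 * lam : ℤ) : ZMod N) = 0}
  zero_mem' := by simp
  add_mem' := by
    intro a b ha hb
    simp only [Set.mem_setOf_eq, Pi.add_apply] at ha hb ⊢
    push_cast at ha hb ⊢
    linear_combination ha + hb
  smul_mem' := by
    intro m a ha
    simp only [Set.mem_setOf_eq, Pi.smul_apply, smul_eq_mul] at ha ⊢
    push_cast at ha ⊢
    linear_combination (m : ZMod N) * ha

theorem Matrix.mem_span_pair_of_dvd_det {R : Type*} [CommRing R] [IsDomain R]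
    {u v z : Fin 2 → R} (hdet : (Matrix.of ![u, v]).det ≠ 0)
    (hzv : (Matrix.of ![u, v]).det ∣ (Matrix.of ![z, v]).det)
    (huz : (Matrix.of ![u, v]).det ∣ (Matrix.of ![u, z]).det) :
    z ∈ Submodule.span R {u, v} := by
  obtain ⟨k₁, hk₁⟩ := hzv
  obtain ⟨k₂, hk₂⟩ := huz
  simp only [Matrix.det_fin_two, Matrix.of_apply, Matrix.cons_val_zero, Matrix.cons_val_one]
    at hdet hk₁ hk₂
  refine Submodule.mem_span_pair.mpr ⟨k₁, k₂, funext fun i => ?_⟩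
  apply mul_left_cancel₀ hdet
  fin_cases i
  · simp only [Pi.add_apply, Pi.smul_apply, smul_eq_mul, Fin.zero_eta]
    linear_combination -u 0 * hk₁ - v 0 * hk₂
  · simp only [Pi.add_apply, Pi.smul_apply, smul_eq_mul, Fin.mk_one]
    linear_combination -u 1 * hk₁ - v 1 * hk₂

section decompLattice2

variable {N : ℕ} {lam : ℤ}

theorem mem_decompLattice2 {z : Fin 2 → ℤ} :
    z ∈ decompLattice2 N lam ↔ ((z 0 + z 1 * lam : ℤ) : ZMod N) = 0 :=
  Iff.rfl

theorem intCast_dvd_det_of_mem_decompLattice2 {z v : Fin 2 → ℤ}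
    (hz : z ∈ decompLattice2 N lam) (hv : v ∈ decompLattice2 N lam) :
    (N : ℤ) ∣ (Matrix.of ![z, v]).det := by
  rw [← ZMod.intCast_zmod_eq_zero_iff_dvd, Matrix.det_fin_two]
  rw [mem_decompLattice2] at hz hv
  push_cast at hz hv ⊢
  simp only [Matrix.of_apply, Matrix.cons_val_zero, Matrix.cons_val_one]
  linear_combination (v 1 : ZMod N) * hz - (z 1 : ZMod N) * hv

theorem span_pair_eq_decompLattice2 (hN : N ≠ 0) {u v : Fin 2 → ℤ}
    (hu : u ∈ decompLattice2 N lam) (hv : v ∈ decompLattice2 N lam)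
    (hdet : (Matrix.of ![u, v]).det.natAbs = N) :
    Submodule.span ℤ {u, v} = decompLattice2 N lam := by
  refine le_antisymm (Submodule.span_le.mpr <| Set.insert_subset hu <| by simpa using hv)
    fun z hz => Matrix.mem_span_pair_of_dvd_det ?_ ?_ ?_
  · rw [← Int.natAbs_ne_zero, hdet]
    exact hN
  · rw [← Int.natAbs_dvd, hdet]
    exact intCast_dvd_det_of_mem_decompLattice2 hz hv
  · rw [← Int.natAbs_dvd, hdet]
    exact intCast_dvd_det_of_mem_decompLattice2 hu hz

end decompLattice2

/-- GLV-type 2-dimensional decomposition basis: if c·λ + b ≡ 1 and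
λ² - t_φ·λ + n_φ ≡ 0 (mod N), then b₁ = (b-1, c) and
b₂ = (c·n_φ + (b-1)·t_φ, 1-b) lie in L; the determinant of the matrix with
rows b₁, b₂ is -((b-1)² + c²·n_φ + c·(b-1)·t_φ) = -(q - t + 1) with
q = c²·n_φ + b·c·t_φ + b² and t = c·t_φ + 2b; and if N equals
(b-1)² + c²·n_φ + c·(b-1)·t_φ then b₁, b₂ span L. -/
theorem glv_two_dimensional_basis
    (N : ℕ) (hN : 0 < N) (lam b c tφ nφ : ℤ)
    (heig : ((c * lam + b : ℤ) : ZMod N) = 1)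
    (hmin : ((lam ^ 2 - tφ * lam + nφ : ℤ) : ZMod N) = 0) :
    (![b - 1, c] ∈ decompLattice2 N lam ∧
      ![c * nφ + (b - 1) * tφ, 1 - b] ∈ decompLattice2 N lam) ∧
    ((!![b - 1, c; c * nφ + (b - 1) * tφ, 1 - b] : Matrix (Fin 2) (Fin 2) ℤ).det
        = -((b - 1) ^ 2 + c ^ 2 * nφ + c * (b - 1) * tφ) ∧
      (b - 1) ^ 2 + c ^ 2 * nφ + c * (b - 1) * tφ
        = (c ^ 2 * nφ + b * c * tφ + b ^ 2) - (c * tφ + 2 * b) + 1) ∧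
    ((N : ℤ) = (b - 1) ^ 2 + c ^ 2 * nφ + c * (b - 1) * tφ →
      Submodule.span ℤ
          ({![b - 1, c], ![c * nφ + (b - 1) * tφ, 1 - b]} : Set (Fin 2 → ℤ))
        = decompLattice2 N lam) := by
  push_cast at heig hmin
  have hb₁ : ![b - 1, c] ∈ decompLattice2 N lam := by
    rw [mem_decompLattice2]
    push_cast
    linear_combination heig
  have hb₂ : ![c * nφ + (b - 1) * tφ, 1 - b] ∈ decompLattice2 N lam := by
    rw [mem_decompLattice2]
    push_cast
    linear_combination (c : ZMod N) * hmin + ((tφ : ZMod N) - lam) * heig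
  have hdet : (!![b - 1, c; c * nφ + (b - 1) * tφ, 1 - b] : Matrix (Fin 2) (Fin 2) ℤ).det
      = -((b - 1) ^ 2 + c ^ 2 * nφ + c * (b - 1) * tφ) := by
    rw [Matrix.det_fin_two_of]
    ring
  refine ⟨⟨hb₁, hb₂⟩, ⟨hdet, by ring⟩, fun hNorm => span_pair_eq_decompLattice2 hN.ne' hb₁ hb₂ ?_⟩
  rw [hdet, ← hNorm, Int.natAbs_neg, Int.natAbs_natCast]
end

section
/- Let N be a positive integer and let p, t₀, λ be integers satisfying p - t₀·λ ≡ 1 (mod N) and λ² + 1 ≡ 0 (mod N). Set b₁ := (p-1, -t₀) and b₂ := (-t₀, 1-p), and let L := {(z₁, z₂) ∈ ℤ² : z₁ + z₂·λ ≡ 0 (mod N)}. Then: (i) b₁ ∈ L and b₂ ∈ L; (ii) b₁ and b₂ are orthogonal, i.e. (p-1)·(-t₀) + (-t₀)·(1-p) = 0; (iii) the determinant of the matrix with rows b₁, b₂ equals -((p-1)² + t₀²); (iv) if N = (p-1)² + t₀², then L equals the ℤ-span of {b₁, b₂}. -/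
theorem mem_span_pair_of_dvd {a b : ℤ} (hab : a ^ 2 + b ^ 2 ≠ 0) {z : Fin 2 → ℤ}
    (h₁ : a ^ 2 + b ^ 2 ∣ a * z 0 + b * z 1) (h₂ : a ^ 2 + b ^ 2 ∣ b * z 0 - a * z 1) :
    z ∈ Submodule.span ℤ ({![a, b], ![b, -a]} : Set (Fin 2 → ℤ)) := by
  obtain ⟨x, hx⟩ := h₁
  obtain ⟨y, hy⟩ := h₂
  refine Submodule.mem_span_pair.mpr ⟨x, y, funext fun i => ?_⟩
  fin_cases i <;> apply mul_left_cancel₀ hab <;>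
    simp only [Fin.zero_eta, Fin.mk_one, Pi.add_apply, Pi.smul_apply, smul_eq_mul,
      Matrix.cons_val_zero, Matrix.cons_val_one]
  · linear_combination -a * hx - b * hy
  · linear_combination -b * hx + a * hy

theorem ne_zero_of_intCast_sq_add_one_eq_zero {N : ℕ} {lam : ℤ}
    (hsq : ((lam ^ 2 + 1 : ℤ) : ZMod N) = 0) : N ≠ 0 := by
  rintro rfl
  have : lam ^ 2 + 1 = 0 := hsq
  nlinarith [sq_nonneg lam]

namespace decompLattice2

variable {N : ℕ} {lam : ℤ}

theorem mem_iff {z : Fin 2 → ℤ} :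
    z ∈ decompLattice2 N lam ↔ ((z 0 : ZMod N) + (z 1 : ZMod N) * lam = 0) := by
  change ((z 0 + z 1 * lam : ℤ) : ZMod N) = 0 ↔ _
  push_cast
  rfl

section

variable (hsq : ((lam ^ 2 + 1 : ℤ) : ZMod N) = 0) {a b : ℤ} (hab : ![a, b] ∈ decompLattice2 N lam)
include hsq hab

theorem rotate_mem : ![b, -a] ∈ decompLattice2 N lam := by
  rw [mem_iff] at hab ⊢
  push_cast at hsq ⊢
  simp only [Matrix.cons_val_zero, Matrix.cons_val_one] at hab ⊢
  linear_combination -lam * hab + b * hsq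

theorem dvd_of_mem {z : Fin 2 → ℤ} (hz : z ∈ decompLattice2 N lam) :
    (N : ℤ) ∣ a * z 0 + b * z 1 ∧ (N : ℤ) ∣ b * z 0 - a * z 1 := by
  rw [mem_iff] at hab hz
  push_cast at hsq
  simp only [Matrix.cons_val_zero, Matrix.cons_val_one] at hab
  simp only [← ZMod.intCast_zmod_eq_zero_iff_dvd]
  push_cast
  constructor
  · linear_combination a * hz - z 1 * lam * hab + z 1 * b * hsq
  · linear_combination b * hz - z 1 * hab

theorem eq_span_pair (hN : (N : ℤ) = a ^ 2 + b ^ 2) :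
    Submodule.span ℤ ({![a, b], ![b, -a]} : Set (Fin 2 → ℤ)) = decompLattice2 N lam := by
  refine le_antisymm ?_ fun z hz => ?_
  · rw [Submodule.span_le, Set.insert_subset_iff, Set.singleton_subset_iff]
    exact ⟨hab, rotate_mem hsq hab⟩
  · have hN0 : a ^ 2 + b ^ 2 ≠ 0 := hN ▸ Int.natCast_ne_zero.mpr (ne_zero_of_intCast_sq_add_one_eq_zero hsq)
    obtain ⟨h₁, h₂⟩ := dvd_of_mem hsq hab hz
    exact mem_span_pair_of_dvd hN0 (hN ▸ h₁) (hN ▸ h₂)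

end

end decompLattice2

theorem gls_basis_general
    (N : ℕ) (p t₀ lam : ℤ)
    (heig : ((p - t₀ * lam : ℤ) : ZMod N) = 1)
    (hsq : ((lam ^ 2 + 1 : ℤ) : ZMod N) = 0) :
    (![p - 1, -t₀] ∈ decompLattice2 N lam ∧ ![-t₀, 1 - p] ∈ decompLattice2 N lam) ∧
    ((p - 1) * (-t₀) + (-t₀) * (1 - p) = 0) ∧
    ((!![p - 1, -t₀; -t₀, 1 - p] : Matrix (Fin 2) (Fin 2) ℤ).det
        = -((p - 1) ^ 2 + t₀ ^ 2)) ∧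
    ((N : ℤ) = (p - 1) ^ 2 + t₀ ^ 2 →
      Submodule.span ℤ ({![p - 1, -t₀], ![-t₀, 1 - p]} : Set (Fin 2 → ℤ))
        = decompLattice2 N lam) := by
  have hb₁ : ![p - 1, -t₀] ∈ decompLattice2 N lam := by
    rw [decompLattice2.mem_iff]
    push_cast at heig ⊢
    linear_combination heig
  have hb₂ : ![-t₀, 1 - p] ∈ decompLattice2 N lam := by
    simpa only [neg_sub] using decompLattice2.rotate_mem hsq hb₁
  refine ⟨⟨hb₁, hb₂⟩, by ring, by rw [Matrix.det_fin_two_of]; ring, fun hN => ?_⟩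
  have hspan := decompLattice2.eq_span_pair hsq hb₁ (by rw [hN, neg_sq])
  rwa [neg_sub] at hspan

/-- The GLS ready-made basis: if p - t₀·λ ≡ 1 and λ² + 1 ≡ 0 (mod N), then
b₁ = (p-1, -t₀) and b₂ = (-t₀, 1-p) lie in L, are orthogonal, the matrix with
rows b₁, b₂ has determinant -((p-1)² + t₀²), and if N = (p-1)² + t₀² then
b₁, b₂ span L. -/
theorem gls_basis
    (N : ℕ) (hN : 0 < N) (p t₀ lam : ℤ)
    (heig : ((p - t₀ * lam : ℤ) : ZMod N) = 1)
    (hsq : ((lam ^ 2 + 1 : ℤ) : ZMod N) = 0) :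
    (![p - 1, -t₀] ∈ decompLattice2 N lam ∧ ![-t₀, 1 - p] ∈ decompLattice2 N lam) ∧
    ((p - 1) * (-t₀) + (-t₀) * (1 - p) = 0) ∧
    ((!![p - 1, -t₀; -t₀, 1 - p] : Matrix (Fin 2) (Fin 2) ℤ).det
        = -((p - 1) ^ 2 + t₀ ^ 2)) ∧
    ((N : ℤ) = (p - 1) ^ 2 + t₀ ^ 2 →
      Submodule.span ℤ ({![p - 1, -t₀], ![-t₀, 1 - p]} : Set (Fin 2 → ℤ))
        = decompLattice2 N lam) :=
  gls_basis_general N p t₀ lam heig hsq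
end

section
/- Let N be a positive integer and let λ_φ, λ_ψ, b, c, t_φ, n_φ be integers satisfying λ_ψ ≡ c·λ_φ + b (mod N), λ_φ² - t_φ·λ_φ + n_φ ≡ 0 (mod N), and λ_ψ² ≡ -1 (mod N). Set b₁ := (1, 0, b, c), b₂ := (0, 1, -c·n_φ, c·t_φ + b), b₃ := (-b, -c, 1, 0), b₄ := (c·n_φ, -c·t_φ - b, 0, 1), and let L := {(z₁, z₂, z₃, z₄) ∈ ℤ⁴ : z₁ + z₂·λ_φ + z₃·λ_ψ + z₄·λ_φ·λ_ψ ≡ 0 (mod N)}. Then: (i) b₁, b₂, b₃, b₄ all lie in L; (ii) if N equals the absolute value of the determinant of the 4×4 integer matrix with rows b₁, b₂, b₃, b₄, then L equals the ℤ-span of {b₁, b₂, b₃, b₄}. -/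
/-!
Each of the four rows lies in `L` because its defining linear form is a combination of the three
congruences. For the converse, compare indices in `ℤ⁴`: the span of the rows has index `|det|`,
while `L` is the kernel of a surjection `ℤ⁴ → ℤ/N` and so has index `N`. A sublattice of `L` of
the same finite index is `L` itself.
-/

/-- The lattice L = {(z₁, z₂, z₃, z₄) ∈ ℤ⁴ : z₁ + z₂·λ_φ + z₃·λ_ψ + z₄·λ_φ·λ_ψ ≡ 0 (mod N)}
of 4-dimensional decompositions of 0. -/
def decompLattice4 (N : ℕ) (lφ lψ : ℤ) : Submodule ℤ (Fin 4 → ℤ) where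
  carrier := {z | ((z 0 + z 1 * lφ + z 2 * lψ + z 3 * (lφ * lψ) : ℤ) : ZMod N) = 0}
  zero_mem' := by simp
  add_mem' := by
    intro a b ha hb
    simp only [Set.mem_setOf_eq, Pi.add_apply] at ha hb ⊢
    push_cast at ha hb ⊢
    linear_combination ha + hb
  smul_mem' := by
    intro m a ha
    simp only [Set.mem_setOf_eq, Pi.smul_apply, smul_eq_mul] at ha ⊢
    push_cast at ha ⊢
    linear_combination (m : ZMod N) * ha

open Submodule Module

theorem Submodule.eq_of_le_of_card_quotient_eq {R E : Type*} [Ring R] [AddCommGroup E]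
    [Module R E] {M L : Submodule R E} (hle : M ≤ L)
    (hcard : Nat.card (E ⧸ M) = Nat.card (E ⧸ L)) (hne : Nat.card (E ⧸ L) ≠ 0) : M = L := by
  have h := AddSubgroup.relIndex_mul_index (H := M.toAddSubgroup) (K := L.toAddSubgroup) hle
  rw [AddSubgroup.index_eq_card, AddSubgroup.index_eq_card] at h
  change _ * Nat.card (E ⧸ L) = Nat.card (E ⧸ M) at h
  rw [hcard, Nat.mul_eq_right hne] at h
  exact le_antisymm hle (AddSubgroup.relIndex_eq_one.mp h)

theorem Matrix.card_quotient_span_rows {ι : Type*} [Fintype ι] [DecidableEq ι]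
    (A : Matrix ι ι ℤ) (hA : A.det ≠ 0) :
    Nat.card ((ι → ℤ) ⧸ span ℤ (Set.range A.row)) = A.det.natAbs := by
  have hli : LinearIndependent ℤ A.row := Matrix.linearIndependent_rows_of_det_ne_zero hA
  rw [← Submodule.natAbs_det_basis_change (Pi.basisFun ℤ ι) _ (Basis.span hli),
    Pi.basisFun_det_apply]
  congr 3
  ext i
  simp

def decompForm (N : ℕ) (lφ lψ : ℤ) : (Fin 4 → ℤ) →ₗ[ℤ] ZMod N where
  toFun z := ((z 0 + z 1 * lφ + z 2 * lψ + z 3 * (lφ * lψ) : ℤ) : ZMod N)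
  map_add' z w := by
    simp only [Pi.add_apply]
    push_cast
    ring
  map_smul' m z := by
    simp only [Pi.smul_apply, smul_eq_mul, RingHom.id_apply, zsmul_eq_mul]
    push_cast
    ring

theorem decompLattice4_eq_ker (N : ℕ) (lφ lψ : ℤ) :
    decompLattice4 N lφ lψ = LinearMap.ker (decompForm N lφ lψ) := rfl

theorem decompForm_surjective (N : ℕ) (lφ lψ : ℤ) :
    Function.Surjective (decompForm N lφ lψ) := by
  intro x
  obtain ⟨n, rfl⟩ := ZMod.intCast_surjective x
  exact ⟨![n, 0, 0, 0], by simp [decompForm]⟩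

theorem card_quotient_decompLattice4 (N : ℕ) (lφ lψ : ℤ) :
    Nat.card ((Fin 4 → ℤ) ⧸ decompLattice4 N lφ lψ) = N := by
  rw [decompLattice4_eq_ker, Nat.card_congr
    (LinearMap.quotKerEquivOfSurjective _ (decompForm_surjective N lφ lψ)).toEquiv,
    Nat.card_zmod]

def glvGlsBasis (b c tφ nφ : ℤ) : Matrix (Fin 4) (Fin 4) ℤ :=
  !![1, 0, b, c;
     0, 1, -(c * nφ), c * tφ + b;
     -b, -c, 1, 0;
     c * nφ, -(c * tφ) - b, 0, 1]

theorem range_glvGlsBasis_row (b c tφ nφ : ℤ) :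
    Set.range (glvGlsBasis b c tφ nφ).row = {![1, 0, b, c], ![0, 1, -(c * nφ), c * tφ + b],
      ![-b, -c, 1, 0], ![c * nφ, -(c * tφ) - b, 0, 1]} := by
  simp only [glvGlsBasis, Matrix.of_row, Matrix.range_cons, Matrix.range_empty, Set.union_empty,
    Set.singleton_union]

theorem glvGlsBasis_row_mem_decompLattice4 {N : ℕ} {lφ lψ b c tφ nφ : ℤ}
    (hψ : (lψ : ZMod N) = c * lφ + b) (hφ : (lφ : ZMod N) ^ 2 - tφ * lφ + nφ = 0)
    (hψ_sq : (lψ : ZMod N) ^ 2 = -1) (i : Fin 4) :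
    (glvGlsBasis b c tφ nφ).row i ∈ decompLattice4 N lφ lψ := by
  change ((_ : ℤ) : ZMod N) = 0
  -- Rows 1 and 2 reduce to `1 + ψ²` and `φ (1 + ψ²)`, rows 3 and 4 to `ψ - cφ - b` and
  -- `φ (ψ - cφ - b) + c (φ² - tφ + n)`.
  fin_cases i <;> simp [glvGlsBasis]
  · linear_combination (-(lψ : ZMod N)) * hψ + hψ_sq
  · linear_combination (lφ : ZMod N) * hψ_sq - (c : ZMod N) * lψ * hφ - (lφ : ZMod N) * lψ * hψ
  · linear_combination hψ
  · linear_combination (lφ : ZMod N) * hψ + (c : ZMod N) * hφ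

/-- The GLV+GLS (Longa–Sica) four-dimensional basis: if λ_ψ ≡ c·λ_φ + b,
λ_φ² - t_φ·λ_φ + n_φ ≡ 0, and λ_ψ² ≡ -1 (mod N), then the four vectors
b₁ = (1,0,b,c), b₂ = (0,1,-c·n_φ, c·t_φ+b), b₃ = (-b,-c,1,0),
b₄ = (c·n_φ, -c·t_φ-b, 0, 1) lie in L; and if N equals the absolute value of
the determinant of the matrix with rows b₁,…,b₄, then they span L. -/
theorem glv_gls_four_dimensional_basis
    (N : ℕ) (hN : 0 < N) (lφ lψ b c tφ nφ : ℤ)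
    (h1 : ((lψ : ℤ) : ZMod N) = ((c * lφ + b : ℤ) : ZMod N))
    (h2 : ((lφ ^ 2 - tφ * lφ + nφ : ℤ) : ZMod N) = 0)
    (h3 : ((lψ ^ 2 : ℤ) : ZMod N) = ((-1 : ℤ) : ZMod N)) :
    (![1, 0, b, c] ∈ decompLattice4 N lφ lψ ∧
      ![0, 1, -(c * nφ), c * tφ + b] ∈ decompLattice4 N lφ lψ ∧
      ![-b, -c, 1, 0] ∈ decompLattice4 N lφ lψ ∧
      ![c * nφ, -(c * tφ) - b, 0, 1] ∈ decompLattice4 N lφ lψ) ∧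
    (N = ((!![1, 0, b, c;
              0, 1, -(c * nφ), c * tφ + b;
              -b, -c, 1, 0;
              c * nφ, -(c * tφ) - b, 0, 1] : Matrix (Fin 4) (Fin 4) ℤ).det).natAbs →
      Submodule.span ℤ
          ({![1, 0, b, c], ![0, 1, -(c * nφ), c * tφ + b],
            ![-b, -c, 1, 0], ![c * nφ, -(c * tφ) - b, 0, 1]} : Set (Fin 4 → ℤ))
        = decompLattice4 N lφ lψ) := by
  push_cast at h1 h2 h3
  have hrow := glvGlsBasis_row_mem_decompLattice4 (nφ := nφ) h1 h2 h3
  refine ⟨⟨hrow 0, hrow 1, hrow 2, hrow 3⟩, fun hdet => ?_⟩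
  change N = (glvGlsBasis b c tφ nφ).det.natAbs at hdet
  have hdet0 : (glvGlsBasis b c tφ nφ).det ≠ 0 := by
    rintro h
    rw [h] at hdet
    omega
  rw [← range_glvGlsBasis_row]
  refine Submodule.eq_of_le_of_card_quotient_eq (span_le.mpr (Set.range_subset_iff.mpr hrow)) ?_ ?_
  · rw [Matrix.card_quotient_span_rows _ hdet0, card_quotient_decompLattice4, hdet]
  · rw [card_quotient_decompLattice4]
    exact hN.ne'
end

section
/- Let N be a positive integer and let λ_φ, λ_ψ, b, c, t_φ, n_φ, e be integers satisfying λ_ψ ≡ c·λ_φ + b (mod N), λ_φ² - t_φ·λ_φ + n_φ ≡ 0 (mod N), and λ_ψ² ≡ e (mod N). Set b₁ := (e, 0, -b, -c), b₂ := (0, e, c·n_φ, -c·t_φ - b), b₃ := (-b, -c, 1, 0), b₄ := (c·n_φ, -c·t_φ - b, 0, 1), and let L := {(z₁, z₂, z₃, z₄) ∈ ℤ⁴ : z₁ + z₂·λ_φ + z₃·λ_ψ + z₄·λ_φ·λ_ψ ≡ 0 (mod N)}. Then: (i) b₁, b₂, b₃, b₄ all lie in L; (ii) if N equals the absolute value of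 the determinant of the 4×4 integer matrix with rows b₁, b₂, b₃, b₄, then L equals the ℤ-span of {b₁, b₂, b₃, b₄}. -/
open Submodule

theorem Submodule.index_span_rows_eq_natAbs_det {ι : Type*} [Fintype ι] [DecidableEq ι]
    {M : Matrix ι ι ℤ} (hM : M.det ≠ 0) :
    (span ℤ (Set.range M)).toAddSubgroup.index = M.det.natAbs := by
  have hli := Matrix.linearIndependent_rows_of_det_ne_zero hM
  have h := natAbs_det_basis_change (Pi.basisFun ℤ ι) _ (Module.Basis.span hli)
  rw [Pi.basisFun_det_apply] at h
  simp only [Function.comp_def, Module.Basis.span_apply] at h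
  exact h.symm

theorem Submodule.span_rows_eq_of_index_eq_natAbs_det {ι : Type*} [Fintype ι] [DecidableEq ι]
    {L : Submodule ℤ (ι → ℤ)} {M : Matrix ι ι ℤ} (hrows : ∀ i, M i ∈ L) (hM : M.det ≠ 0)
    (hL : L.toAddSubgroup.index = M.det.natAbs) :
    span ℤ (Set.range M) = L := by
  have hle : span ℤ (Set.range M) ≤ L := span_le.mpr (Set.range_subset_iff.mpr hrows)
  have hindex := index_span_rows_eq_natAbs_det hM
  have : (span ℤ (Set.range M)).toAddSubgroup.FiniteIndex := ⟨by rwa [hindex, Int.natAbs_ne_zero]⟩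
  refine hle.eq_of_not_lt fun hlt => ?_
  have := AddSubgroup.index_strictAnti (toAddSubgroup_strictMono hlt)
  omega

def decompLattice4Form (N : ℕ) (lφ lψ : ℤ) : (Fin 4 → ℤ) →+ ZMod N :=
  AddMonoidHom.mk' (fun z => ((z 0 + z 1 * lφ + z 2 * lψ + z 3 * (lφ * lψ) : ℤ) : ZMod N))
    fun z w => by simp only [Pi.add_apply]; push_cast; ring

theorem decompLattice4Form_surjective (N : ℕ) (lφ lψ : ℤ) :
    Function.Surjective (decompLattice4Form N lφ lψ) := by
  intro k
  obtain ⟨m, rfl⟩ := ZMod.intCast_surjective k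
  exact ⟨![m, 0, 0, 0], by simp [decompLattice4Form]⟩

theorem index_decompLattice4 (N : ℕ) (lφ lψ : ℤ) :
    (decompLattice4 N lφ lψ).toAddSubgroup.index = N := by
  have hker : (decompLattice4 N lφ lψ).toAddSubgroup = (decompLattice4Form N lφ lψ).ker := rfl
  rw [hker, AddSubgroup.index_ker,
    AddMonoidHom.range_eq_top.mpr (decompLattice4Form_surjective N lφ lψ),
    AddSubgroup.card_top, Nat.card_zmod]

theorem mem_decompLattice4 {N : ℕ} {lφ lψ : ℤ} {z : Fin 4 → ℤ} :
    z ∈ decompLattice4 N lφ lψ ↔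
      (z 0 : ZMod N) + z 1 * lφ + z 2 * lψ + z 3 * (lφ * lψ) = 0 := by
  change ((_ : ℤ) : ZMod N) = 0 ↔ _
  push_cast
  rfl

def guillevicIonicaMatrix (b c tφ nφ e : ℤ) : Matrix (Fin 4) (Fin 4) ℤ :=
  !![e, 0, -b, -c;
     0, e, c * nφ, -(c * tφ) - b;
     -b, -c, 1, 0;
     c * nφ, -(c * tφ) - b, 0, 1]

theorem guillevicIonicaMatrix_row_mem {N : ℕ} {lφ lψ b c tφ nφ e : ℤ}
    (hψ : (lψ : ZMod N) = c * lφ + b) (hφ : (lφ : ZMod N) ^ 2 - tφ * lφ + nφ = 0)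
    (he : (lψ : ZMod N) ^ 2 = e) (i : Fin 4) :
    guillevicIonicaMatrix b c tφ nφ e i ∈ decompLattice4 N lφ lψ := by
  have hb₃ : (-b : ZMod N) - c * lφ + lψ = 0 := by linear_combination hψ
  have hb₄ : (c * nφ : ZMod N) + (-(c * tφ) - b) * lφ + lφ * lψ = 0 := by
    linear_combination lφ * hψ + c * hφ
  fin_cases i <;>
    simp only [guillevicIonicaMatrix, mem_decompLattice4, Matrix.of_apply, Matrix.cons_val',
      Matrix.cons_val_zero, Matrix.cons_val_fin_one, Matrix.cons_val_one, Matrix.cons_val,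
      Fin.reduceFinMk, Fin.zero_eta, Fin.mk_one, Fin.isValue] <;>
    push_cast
  · linear_combination lψ * hb₃ - he
  · linear_combination lψ * hb₄ - lφ * he
  · linear_combination hb₃
  · linear_combination hb₄

/-- The Guillevic–Ionica four-dimensional basis: if λ_ψ ≡ c·λ_φ + b,
λ_φ² - t_φ·λ_φ + n_φ ≡ 0, and λ_ψ² ≡ e (mod N), then the four vectors
b₁ = (e,0,-b,-c), b₂ = (0,e,c·n_φ, -c·t_φ-b), b₃ = (-b,-c,1,0),
b₄ = (c·n_φ, -c·t_φ-b, 0, 1) lie in L; and if N equals the absolute value of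
the determinant of the matrix with rows b₁,…,b₄, then they span L. -/
theorem guillevic_ionica_four_dimensional_basis
    (N : ℕ) (hN : 0 < N) (lφ lψ b c tφ nφ e : ℤ)
    (h1 : ((lψ : ℤ) : ZMod N) = ((c * lφ + b : ℤ) : ZMod N))
    (h2 : ((lφ ^ 2 - tφ * lφ + nφ : ℤ) : ZMod N) = 0)
    (h3 : ((lψ ^ 2 : ℤ) : ZMod N) = ((e : ℤ) : ZMod N)) :
    (![e, 0, -b, -c] ∈ decompLattice4 N lφ lψ ∧
      ![0, e, c * nφ, -(c * tφ) - b] ∈ decompLattice4 N lφ lψ ∧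
      ![-b, -c, 1, 0] ∈ decompLattice4 N lφ lψ ∧
      ![c * nφ, -(c * tφ) - b, 0, 1] ∈ decompLattice4 N lφ lψ) ∧
    (N = ((!![e, 0, -b, -c;
              0, e, c * nφ, -(c * tφ) - b;
              -b, -c, 1, 0;
              c * nφ, -(c * tφ) - b, 0, 1] : Matrix (Fin 4) (Fin 4) ℤ).det).natAbs →
      Submodule.span ℤ
          ({![e, 0, -b, -c], ![0, e, c * nφ, -(c * tφ) - b],
            ![-b, -c, 1, 0], ![c * nφ, -(c * tφ) - b, 0, 1]} : Set (Fin 4 → ℤ))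
        = decompLattice4 N lφ lψ) := by
  push_cast at h1 h2 h3
  have hrows := guillevicIonicaMatrix_row_mem h1 h2 h3
  refine ⟨⟨hrows 0, hrows 1, hrows 2, hrows 3⟩, fun hdet => ?_⟩
  change N = (guillevicIonicaMatrix b c tφ nφ e).det.natAbs at hdet
  have hrange : Set.range (guillevicIonicaMatrix b c tφ nφ e) =
      {![e, 0, -b, -c], ![0, e, c * nφ, -(c * tφ) - b],
        ![-b, -c, 1, 0], ![c * nφ, -(c * tφ) - b, 0, 1]} := by
    change Set.range ![_, _, _, _] = _
    simp only [Matrix.range_cons, Matrix.range_empty, Set.union_empty, Set.singleton_union]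
  rw [← hrange]
  exact span_rows_eq_of_index_eq_natAbs_det hrows
    (Int.natAbs_ne_zero.mp (hdet ▸ hN.ne')) (by rw [index_decompLattice4, hdet])
end

section
/- Let N be a positive integer and let q, t, c, λ be integers with t even, satisfying c² = q - (t/2)², c·λ + t/2 ≡ 1 (mod N), and λ² + 1 ≡ 0 (mod N). Set b₁ := (t/2 - 1, c) and b₂ := (c, 1 - t/2), and let L := {(z₁, z₂) ∈ ℤ² : z₁ + z₂·λ ≡ 0 (mod N)}. Then: (i) b₁ ∈ L and b₂ ∈ L; (ii) b₁ and b₂ are orthogonal, i.e. (t/2 - 1)·c + c·(1 - t/2) = 0; (iii) the determinant of the matrix with rows b₁, b₂ equals -(q - t + 1). -/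
theorem vec_mem_decompLattice2_iff {N : ℕ} {lam a b : ℤ} :
    ![a, b] ∈ decompLattice2 N lam ↔ (a : ZMod N) + b * lam = 0 := by
  change ((a + b * lam : ℤ) : ZMod N) = 0 ↔ _
  push_cast
  rfl

/-- The rotation `(a, b) ↦ (b, -a)` is multiplication of `a + b·φ` by `-φ`, where `φ² = -1`. -/
theorem vec_rotate_mem_decompLattice2 {N : ℕ} {lam a b : ℤ}
    (hsq : ((lam ^ 2 + 1 : ℤ) : ZMod N) = 0) (hab : ![a, b] ∈ decompLattice2 N lam) :
    ![b, -a] ∈ decompLattice2 N lam := by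
  rw [vec_mem_decompLattice2_iff] at hab ⊢
  push_cast at hsq ⊢
  linear_combination (b : ZMod N) * hsq - (lam : ZMod N) * hab

theorem det_glv_j1728 {q s c : ℤ} (hc : c ^ 2 = q - s ^ 2) :
    (!![s - 1, c; c, 1 - s] : Matrix (Fin 2) (Fin 2) ℤ).det = -(q - 2 * s + 1) := by
  rw [Matrix.det_fin_two_of]
  linear_combination -hc

theorem glv_j1728_basis_general
    (N : ℕ) (q t c lam : ℤ) (ht : 2 ∣ t)
    (hc : c ^ 2 = q - (t / 2) ^ 2)
    (heig : ((c * lam + t / 2 : ℤ) : ZMod N) = 1)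
    (hsq : ((lam ^ 2 + 1 : ℤ) : ZMod N) = 0) :
    (![t / 2 - 1, c] ∈ decompLattice2 N lam ∧
      ![c, 1 - t / 2] ∈ decompLattice2 N lam) ∧
    ((t / 2 - 1) * c + c * (1 - t / 2) = 0) ∧
    ((!![t / 2 - 1, c; c, 1 - t / 2] : Matrix (Fin 2) (Fin 2) ℤ).det
        = -(q - t + 1)) := by
  have hb₁ : ![t / 2 - 1, c] ∈ decompLattice2 N lam := by
    rw [vec_mem_decompLattice2_iff]
    push_cast at heig ⊢
    linear_combination heig
  have hb₂ : ![c, 1 - t / 2] ∈ decompLattice2 N lam := by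
    simpa only [neg_sub] using vec_rotate_mem_decompLattice2 hsq hb₁
  refine ⟨⟨hb₁, hb₂⟩, by ring, ?_⟩
  rw [det_glv_j1728 hc, Int.mul_ediv_cancel' ht]

/-- The GLV basis for j-invariant 1728: if t is even, c² = q - (t/2)²,
c·λ + t/2 ≡ 1 and λ² + 1 ≡ 0 (mod N), then b₁ = (t/2 - 1, c) and
b₂ = (c, 1 - t/2) lie in L, are orthogonal, and the matrix with rows b₁, b₂
has determinant -(q - t + 1). -/
theorem glv_j1728_basis
    (N : ℕ) (hN : 0 < N) (q t c lam : ℤ) (ht : 2 ∣ t)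
    (hc : c ^ 2 = q - (t / 2) ^ 2)
    (heig : ((c * lam + t / 2 : ℤ) : ZMod N) = 1)
    (hsq : ((lam ^ 2 + 1 : ℤ) : ZMod N) = 0) :
    (![t / 2 - 1, c] ∈ decompLattice2 N lam ∧
      ![c, 1 - t / 2] ∈ decompLattice2 N lam) ∧
    ((t / 2 - 1) * c + c * (1 - t / 2) = 0) ∧
    ((!![t / 2 - 1, c; c, 1 - t / 2] : Matrix (Fin 2) (Fin 2) ℤ).det
        = -(q - t + 1)) :=
  glv_j1728_basis_general N q t c lam ht hc heig hsq
end
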